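/- Let N₁, N₂ be the endomorphisms of ℚ⁶ given on the standard basis by N₁: e₃ ↦ e₁, e₄ ↦ e₂, e₅ ↦ e₃, e₆ ↦ e₄ (e₁, e₂ ↦ 0), and N₂: e₃ ↦ e₁ + e₂, e₄ ↦ e₁ − e₂, e₅ ↦ e₃ + e₄, e₆ ↦ e₃ − e₄ (e₁, e₂ ↦ 0). For positive rationals a, b with a² ≠ 2b², the monodromy weight filtration W of N = aN₁ + bN₂ is given by W_{-3} = 0, W_{-2} = W_{-1} = span(e₁,e₂), W_0 = W_1 = span(e₁,e₂,e₃,e₄), W_2 = ℚ⁶. In particular this filtration is independent of (a,b) in the region a² ≠ 2b². -/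

import Mathlib

/-- `W` is the monodromy weight filtration of the nilpotent endomorphism `N`,
centered at `0`: it is increasing, exhaustive and separated, satisfies
`N (W m) ⊆ W (m-2)`, and for every `k ≥ 0` the map induced by `N ^ k` gives an
isomorphism `gr^W_k → gr^W_{-k}` (expressed by the injectivity and surjectivity
conditions on associated graded pieces). -/
def IsWeightFiltration {K V : Type*} [Field K] [AddCommGroup V] [Module K V]
    (N : V →ₗ[K] V) (W : ℤ → Submodule K V) : Prop :=
  Monotone W ∧ (∃ m : ℤ, W m = ⊥) ∧ (∃ m : ℤ, W m = ⊤) ∧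
  (∀ m : ℤ, (W m).map N ≤ W (m - 2)) ∧
  (∀ k : ℕ,
    W (k : ℤ) ⊓ (W (-(k : ℤ) - 1)).comap (N ^ k) ≤ W ((k : ℤ) - 1) ∧
    W (-(k : ℤ)) ≤ W (-(k : ℤ) - 1) ⊔ (W (k : ℤ)).map (N ^ k))


/-- `N₁ : e₃ ↦ e₁, e₄ ↦ e₂, e₅ ↦ e₃, e₆ ↦ e₄` (and `e₁, e₂ ↦ 0`). -/
def N1 : (Fin 6 → ℚ) →ₗ[ℚ] (Fin 6 → ℚ) :=
  Matrix.mulVecLin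
    !![0,0,1,0,0,0; 0,0,0,1,0,0; 0,0,0,0,1,0; 0,0,0,0,0,1; 0,0,0,0,0,0; 0,0,0,0,0,0]

/-- `N₂ : e₃ ↦ e₁+e₂, e₄ ↦ e₁−e₂, e₅ ↦ e₃+e₄, e₆ ↦ e₃−e₄` (and `e₁, e₂ ↦ 0`). -/
def N2 : (Fin 6 → ℚ) →ₗ[ℚ] (Fin 6 → ℚ) :=
  Matrix.mulVecLin
    !![0,0,1,1,0,0; 0,0,1,-1,0,0; 0,0,0,0,1,1; 0,0,0,0,1,-1; 0,0,0,0,0,0; 0,0,0,0,0,0]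

/-- span of `e₁, e₂`. -/
noncomputable def span2 : Submodule ℚ (Fin 6 → ℚ) :=
  Submodule.span ℚ {Pi.single 0 1, Pi.single 1 1}

/-- span of `e₁, e₂, e₃, e₄`. -/
noncomputable def span4 : Submodule ℚ (Fin 6 → ℚ) :=
  Submodule.span ℚ {Pi.single 0 1, Pi.single 1 1, Pi.single 2 1, Pi.single 3 1}

namespace Stmt14Aux

lemma vec6_four (v0 v1 v2 v3 v4 v5 : ℚ) : (![v0,v1,v2,v3,v4,v5]) 4 = v4 := rfl
lemma vec6_five (v0 v1 v2 v3 v4 v5 : ℚ) : (![v0,v1,v2,v3,v4,v5]) 5 = v5 := rfl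

lemma Napp (a b : ℚ) (v : Fin 6 → ℚ) :
    (a • N1 + b • N2) v =
      ![(a+b)*v 2 + b*v 3, b*v 2 + (a-b)*v 3, (a+b)*v 4 + b*v 5, b*v 4 + (a-b)*v 5, 0, 0] := by
  funext i
  fin_cases i <;>
    simp [N1, N2, Matrix.mulVecLin_apply, Matrix.mulVec, dotProduct,
      Fin.sum_univ_six, vec6_four, vec6_five] <;> ring

lemma mem_span2_iff (v : Fin 6 → ℚ) :
    v ∈ span2 ↔ v 2 = 0 ∧ v 3 = 0 ∧ v 4 = 0 ∧ v 5 = 0 := by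
  rw [span2, Submodule.mem_span_pair]
  constructor
  · rintro ⟨c, d, rfl⟩
    simp [Pi.single_apply]
  · rintro ⟨h2, h3, h4, h5⟩
    exact ⟨v 0, v 1, by funext i; fin_cases i <;> simp [Pi.single_apply, h2, h3, h4, h5]⟩

lemma mem_span4_iff (v : Fin 6 → ℚ) :
    v ∈ span4 ↔ v 4 = 0 ∧ v 5 = 0 := by
  rw [span4, show ({Pi.single 0 1, Pi.single 1 1, Pi.single 2 1, Pi.single 3 1} :
      Set (Fin 6 → ℚ)) = insert (Pi.single 0 1) (insert (Pi.single 1 1)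
      {Pi.single 2 1, Pi.single 3 1}) from rfl,
    Submodule.mem_span_insert]
  constructor
  · rintro ⟨c, z, hz, rfl⟩
    rw [Submodule.mem_span_insert] at hz
    obtain ⟨d, w, hw, rfl⟩ := hz
    rw [Submodule.mem_span_pair] at hw
    obtain ⟨e, f, rfl⟩ := hw
    simp [Pi.single_apply]
  · rintro ⟨h4, h5⟩
    refine ⟨v 0, v - v 0 • (Pi.single 0 1 : Fin 6 → ℚ), ?_, by abel⟩
    rw [Submodule.mem_span_insert]
    refine ⟨v 1, v - v 0 • (Pi.single 0 1 : Fin 6 → ℚ) - v 1 • (Pi.single 1 1 : Fin 6 → ℚ),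
      ?_, by abel⟩
    rw [Submodule.mem_span_pair]
    exact ⟨v 2, v 3, by funext i; fin_cases i <;> simp [Pi.single_apply, h4, h5]⟩

section Params

variable {a b : ℚ} (hab : a ^ 2 ≠ 2 * b ^ 2)

/-- solve the 2×2 system -/
lemma solve22 (hab : a ^ 2 ≠ 2 * b ^ 2) {x y : ℚ}
    (h1 : (a+b)*x + b*y = 0) (h2 : b*x + (a-b)*y = 0) : x = 0 ∧ y = 0 := by
  have hD : a ^ 2 - 2 * b ^ 2 ≠ 0 := sub_ne_zero.mpr hab
  constructor
  · have hx : (a ^ 2 - 2 * b ^ 2) * x = (a-b)*((a+b)*x + b*y) - b*(b*x + (a-b)*y) := by ring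
    rw [h1, h2] at hx
    simpa [hD] using hx
  · have hy : (a ^ 2 - 2 * b ^ 2) * y = (a+b)*(b*x + (a-b)*y) - b*((a+b)*x + b*y) := by ring
    rw [h1, h2] at hy
    simpa [hD] using hy

lemma ker_le (hab : a ^ 2 ≠ 2 * b ^ 2) {v : Fin 6 → ℚ}
    (hv : (a • N1 + b • N2) v = 0) : v ∈ span2 := by
  rw [Napp] at hv
  have h0 := congrFun hv 0
  have h1 := congrFun hv 1
  have h2 := congrFun hv 2
  have h3 := congrFun hv 3
  simp [vec6_four, vec6_five] at h0 h1 h2 h3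
  obtain ⟨e2, e3⟩ := solve22 hab h0 h1
  obtain ⟨e4, e5⟩ := solve22 hab h2 h3
  exact (mem_span2_iff v).mpr ⟨e2, e3, e4, e5⟩

lemma comap_le (hab : a ^ 2 ≠ 2 * b ^ 2) {v : Fin 6 → ℚ}
    (hv : (a • N1 + b • N2) v ∈ span2) : v ∈ span4 := by
  rw [mem_span2_iff, Napp] at hv
  obtain ⟨h2, h3, -, -⟩ := hv
  simp [vec6_four, vec6_five] at h2 h3
  obtain ⟨e4, e5⟩ := solve22 hab h2 h3
  exact (mem_span4_iff v).mpr ⟨e4, e5⟩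

lemma sq_mem_span2 (a b : ℚ) (v : Fin 6 → ℚ) :
    (a • N1 + b • N2) ((a • N1 + b • N2) v) ∈ span2 := by
  rw [mem_span2_iff, Napp, Napp]
  simp [vec6_four, vec6_five]

lemma cube_zero (a b : ℚ) : (a • N1 + b • N2) ^ 3 = 0 := by
  apply LinearMap.ext; intro v; funext i
  have h := sq_mem_span2 a b v
  rw [mem_span2_iff] at h
  rw [show ((a • N1 + b • N2) ^ 3) v = (a • N1 + b • N2)
    ((a • N1 + b • N2) ((a • N1 + b • N2) v)) from by
      rw [pow_succ, pow_two]; rfl]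
  rw [Napp]
  obtain ⟨h2, h3, h4, h5⟩ := h
  revert h2 h3 h4 h5
  generalize (a • N1 + b • N2) ((a • N1 + b • N2) v) = w
  intro h2 h3 h4 h5
  fin_cases i <;> simp [vec6_four, vec6_five, h2, h3, h4, h5]

lemma span2_le_map_span4 (hab : a ^ 2 ≠ 2 * b ^ 2) :
    span2 ≤ Submodule.map (a • N1 + b • N2) span4 := by
  have hD : a ^ 2 - 2 * b ^ 2 ≠ 0 := sub_ne_zero.mpr hab
  have hD' : a ^ 2 - b ^ 2 * 2 ≠ 0 := by rwa [mul_comm]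
  rw [span2, Submodule.span_le]
  rintro x (rfl | rfl)
  · refine ⟨![0, 0, (a-b)/(a^2-2*b^2), -b/(a^2-2*b^2), 0, 0],
      (mem_span4_iff _).mpr ⟨rfl, rfl⟩, ?_⟩
    rw [Napp]
    funext i
    fin_cases i <;> simp [vec6_four, vec6_five, Pi.single_apply] <;> field_simp <;> ring
  · refine ⟨![0, 0, -b/(a^2-2*b^2), (a+b)/(a^2-2*b^2), 0, 0],
      (mem_span4_iff _).mpr ⟨rfl, rfl⟩, ?_⟩
    rw [Napp]
    funext i
    fin_cases i <;> simp [vec6_four, vec6_five, Pi.single_apply] <;> field_simp <;> ring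

lemma span4_le_range (hab : a ^ 2 ≠ 2 * b ^ 2) :
    span4 ≤ Submodule.map (a • N1 + b • N2) ⊤ := by
  have hD : a ^ 2 - 2 * b ^ 2 ≠ 0 := sub_ne_zero.mpr hab
  have hD' : a ^ 2 - b ^ 2 * 2 ≠ 0 := by rwa [mul_comm]
  rw [span4, Submodule.span_le]
  have h12 : ({Pi.single 0 1, Pi.single 1 1} : Set (Fin 6 → ℚ)) ⊆
      Submodule.map (a • N1 + b • N2) ⊤ := by
    intro x hx
    have := span2_le_map_span4 hab (Submodule.subset_span hx)
    exact Submodule.map_mono le_top this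
  rintro x (rfl | rfl | rfl | rfl)
  · exact h12 (Or.inl rfl)
  · exact h12 (Or.inr rfl)
  · refine ⟨![0, 0, 0, 0, (a-b)/(a^2-2*b^2), -b/(a^2-2*b^2)], trivial, ?_⟩
    rw [Napp]
    funext i
    fin_cases i <;> simp [vec6_four, vec6_five, Pi.single_apply] <;> field_simp <;> ring
  · refine ⟨![0, 0, 0, 0, -b/(a^2-2*b^2), (a+b)/(a^2-2*b^2)], trivial, ?_⟩
    rw [Napp]
    funext i
    fin_cases i <;> simp [vec6_four, vec6_five, Pi.single_apply] <;> field_simp <;> ring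

end Params
end Stmt14Aux


open Stmt14Aux

/-- For positive rationals `a, b` with `a² ≠ 2b²`, the monodromy weight
filtration of `N = a • N₁ + b • N₂` is
`0 = W₋₃ ⊆ W₋₂ = W₋₁ = span(e₁,e₂) ⊆ W₀ = W₁ = span(e₁,…,e₄) ⊆ W₂ = ℚ⁶`,
independently of `(a, b)`. -/
theorem stmt14 (a b : ℚ) (ha : 0 < a) (hb : 0 < b) (hab : a ^ 2 ≠ 2 * b ^ 2)
    (W : ℤ → Submodule ℚ (Fin 6 → ℚ))
    (hW : IsWeightFiltration (a • N1 + b • N2) W) :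
    W (-3) = ⊥ ∧ W (-2) = span2 ∧ W (-1) = span2 ∧
    W 0 = span4 ∧ W 1 = span4 ∧ W 2 = ⊤ := by
  obtain ⟨hmono, ⟨mb, hbot⟩, ⟨mt, htop⟩, hNW, hk⟩ := hW
  set N : (Fin 6 → ℚ) →ₗ[ℚ] (Fin 6 → ℚ) := a • N1 + b • N2 with hNdef
  have hpow0 : ∀ k : ℕ, 3 ≤ k → N ^ k = 0 := by
    intro k hk3
    obtain ⟨j, rfl⟩ := Nat.exists_eq_add_of_le hk3
    rw [pow_add, cube_zero, zero_mul]
  -- one descent step at each k ≥ 3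
  have hstep : ∀ n : ℕ, W ((n : ℤ) + 3) ≤ W ((n : ℤ) + 2) := by
    intro n
    have := (hk (n + 3)).1
    rw [hpow0 _ (by omega)] at this
    push_cast at this
    have h2 : W ((n : ℤ) + 3) ⊓ Submodule.comap (0 : (Fin 6 → ℚ) →ₗ[ℚ] (Fin 6 → ℚ))
        (W (-((n : ℤ) + 3) - 1)) ≤ W ((n : ℤ) + 3 - 1) := this
    rw [Submodule.comap_zero, inf_top_eq] at h2
    simpa [show (n : ℤ) + 3 - 1 = (n : ℤ) + 2 from by ring] using h2
  have hstep' : ∀ n : ℕ, W (-((n : ℤ) + 3)) ≤ W (-((n : ℤ) + 3) - 1) := by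
    intro n
    have := (hk (n + 3)).2
    rw [hpow0 _ (by omega)] at this
    push_cast at this
    simpa [Submodule.map_zero] using this
  -- W m = W 2 for m ≥ 2
  have hup : ∀ n : ℕ, W (2 + (n : ℤ)) ≤ W 2 := by
    intro n
    induction n with
    | zero => simp
    | succ n ih =>
      refine le_trans ?_ ih
      have := hstep n
      rw [show (n : ℤ) + 3 = 2 + ((n : ℕ) + 1 : ℕ) from by push_cast; ring,
        show (n : ℤ) + 2 = 2 + (n : ℤ) from by ring] at this
      exact this
  have hW2 : W 2 = ⊤ := by
    rcases le_or_gt mt 2 with h | h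
    · exact top_unique (htop ▸ hmono h)
    · have := hup (mt - 2).toNat
      rw [show 2 + (((mt - 2).toNat : ℕ) : ℤ) = mt from by omega] at this
      exact top_unique (htop ▸ this)
  -- W (-3) ≤ W m for m ≤ -3
  have hdown : ∀ n : ℕ, W (-3) ≤ W (-3 - (n : ℤ)) := by
    intro n
    induction n with
    | zero => simp
    | succ n ih =>
      refine le_trans ih ?_
      have := hstep' n
      rw [show -((n : ℤ) + 3) = -3 - (n : ℤ) from by ring,
        show -3 - (n : ℤ) - 1 = -3 - ((n : ℕ) + 1 : ℕ) from by push_cast; ring] at this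
      exact this
  have hW3 : W (-3) = ⊥ := by
    rcases le_or_gt (-3) mb with h | h
    · exact le_bot_iff.mp (hbot ▸ hmono h)
    · have := hdown (-3 - mb).toNat
      rw [show -3 - (((-3 - mb).toNat : ℕ) : ℤ) = mb from by omega] at this
      exact le_bot_iff.mp (hbot ▸ this)
  -- span4 ≤ W 0
  have hs4W0 : span4 ≤ W 0 := by
    refine le_trans (span4_le_range hab) ?_
    have := hNW 2
    rw [hW2] at this
    simpa using this
  -- span2 ≤ W (-2)
  have hs2W2 : span2 ≤ W (-2) := by
    refine le_trans (span2_le_map_span4 hab) ?_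
    refine le_trans (Submodule.map_mono hs4W0) ?_
    simpa using hNW 0
  -- W (-2) ≤ span2
  have hW2s2 : W (-2) ≤ span2 := by
    have h := (hk 2).2
    have hpow2 : ∀ v, (N ^ 2) v = N (N v) := fun v => by rw [pow_two]; rfl
    push_cast at h
    rw [hW3] at h
    refine le_trans h ?_
    rw [bot_sup_eq]
    rintro x ⟨v, -, rfl⟩
    rw [hpow2]
    exact sq_mem_span2 a b v
  have hWm2 : W (-2) = span2 := le_antisymm hW2s2 hs2W2
  -- W 0 ≤ span4
  have hW0 : W 0 = span4 := by
    refine le_antisymm ?_ hs4W0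
    intro v hv
    have : N v ∈ span2 := by
      rw [← hWm2]
      simpa using hNW 0 ⟨v, hv, rfl⟩
    exact comap_le hab this
  -- W (-1)
  have hWm1 : W (-1) = span2 := by
    refine le_antisymm ?_ (hWm2 ▸ hmono (by norm_num))
    intro v hv
    have : N v ∈ W (-3) := by simpa using hNW (-1) ⟨v, hv, rfl⟩
    rw [hW3] at this
    exact ker_le hab ((Submodule.mem_bot ℚ).mp this)
  -- W 1
  have hW1 : W 1 = span4 := by
    refine le_antisymm ?_ (hW0 ▸ hmono (by norm_num))
    intro v hv
    have : N v ∈ span2 := by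
      rw [← hWm1]
      simpa using hNW 1 ⟨v, hv, rfl⟩
    exact comap_le hab this
  exact ⟨hW3, hWm2, hWm1, hW0, hW1, hW2⟩
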